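/- The Grothendieck constant of the complete graph K_3 (the triangle) equals 3/2. -/

import Mathlib

open Finset Real
open scoped Classical Pointwise

noncomputable section

variable {V : Type*} [Fintype V] [LinearOrder V]

/-- Sum over the edges of `G` (pairs `i < j` with `G.Adj i j`) of `w i j * x i j`. -/
def edgeSum (G : SimpleGraph V) (w : V → V → ℝ) (x : V → V → ℝ) : ℝ :=
  ∑ i, ∑ j, if i < j ∧ G.Adj i j then w i j * x i j else 0

/-- `ip(G,w)`: maximum of `∑_{ij ∈ E} w_ij x_i x_j` over `x ∈ {±1}^V`. -/
def ipVal (G : SimpleGraph V) (w : V → V → ℝ) : ℝ :=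
  sSup {t | ∃ x : V → ℝ, (∀ i, x i = 1 ∨ x i = -1) ∧
    t = edgeSum G w (fun i j => x i * x j)}

/-- `sdp(G,w)`: maximum of `∑_{ij ∈ E} w_ij ⟪u_i,u_j⟫` over unit vectors. -/
def sdpVal (G : SimpleGraph V) (w : V → V → ℝ) : ℝ :=
  sSup {t | ∃ u : V → EuclideanSpace ℝ V, (∀ i, ‖u i‖ = 1) ∧
    t = edgeSum G w (fun i j => (inner ℝ (u i) (u j) : ℝ))}

/-- The Grothendieck constant `κ(G) = sup_w sdp(G,w)/ip(G,w)`. -/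
def kappaVal (G : SimpleGraph V) : ℝ :=
  sSup {t | ∃ w : V → V → ℝ, t = sdpVal G w / ipVal G w}

/-- The elliptope: PSD matrices with unit diagonal. -/
def elliptope (V : Type*) [Fintype V] : Set (Matrix V V ℝ) :=
  {X | X.PosSemidef ∧ ∀ i, X i i = 1}

/-- The cut polytope: convex hull of rank-one ±1 correlation matrices. -/
def cutPolytope (V : Type*) [Fintype V] : Set (Matrix V V ℝ) :=
  convexHull ℝ {X | ∃ x : V → ℝ, (∀ i, x i = 1 ∨ x i = -1) ∧
    X = Matrix.of fun i j => x i * x j}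

/-- Projection of a matrix onto the edge set of `G`. -/
def projE (G : SimpleGraph V) (X : Matrix V V ℝ) : V → V → ℝ :=
  fun i j => if G.Adj i j then X i j else 0

/-- `𝓔(G)`: projection of the elliptope onto the edge set of `G`. -/
def ellG (G : SimpleGraph V) : Set (V → V → ℝ) := projE G '' elliptope V

/-- `CUT(G)`: projection of the cut polytope onto the edge set of `G`. -/
def cutG (G : SimpleGraph V) : Set (V → V → ℝ) := projE G '' cutPolytope V

end

/-! For unit vectors `u₀, u₁, u₂` with pairwise inner products `a, b, c` and signs `ε₁, ε₂`,
`‖u₀ + ε₁ u₁ + ε₂ u₂‖² ≥ 0` says `3 + 2 (ε₁ a + ε₂ b + ε₁ε₂ c) ≥ 0`. Divided by `8`, these four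
numbers are the coefficients writing `(a, b, c)` as a combination of the four cut vectors
`(ε₁, ε₂, ε₁ε₂)`, and they sum to `3/2`; hence `sdp ≤ 3/2 · ip`. Equality holds for `w ≡ -1`,
where `ip = 1` and three unit vectors at angle `2π/3` give `sdp = 3/2`. -/

open RealInnerProductSpace

theorem abs_mul_le_one_of_sign {a b : ℝ} (ha : a = 1 ∨ a = -1) (hb : b = 1 ∨ b = -1) :
    |a * b| ≤ 1 := by
  rcases ha with rfl | rfl <;> rcases hb with rfl | rfl <;> norm_num

section Generic

variable {V : Type*} [Fintype V] [LinearOrder V] (G : SimpleGraph V) (w : V → V → ℝ)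

theorem edgeSum_le_sum_abs {x : V → V → ℝ} (hx : ∀ i j, |x i j| ≤ 1) :
    edgeSum G w x ≤ ∑ i, ∑ j, |w i j| := by
  refine sum_le_sum fun i _ => sum_le_sum fun j _ => ?_
  split_ifs
  · calc w i j * x i j ≤ |w i j * x i j| := le_abs_self _
      _ = |w i j| * |x i j| := abs_mul _ _
      _ ≤ |w i j| := mul_le_of_le_one_right (abs_nonneg _) (hx i j)
  · exact abs_nonneg _

theorem le_ipVal {x : V → ℝ} (hx : ∀ i, x i = 1 ∨ x i = -1) :
    edgeSum G w (fun i j => x i * x j) ≤ ipVal G w := by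
  refine le_csSup ⟨∑ i, ∑ j, |w i j|, ?_⟩ ⟨x, hx, rfl⟩
  rintro _ ⟨y, hy, rfl⟩
  exact edgeSum_le_sum_abs G w (fun i j => abs_mul_le_one_of_sign (hy i) (hy j))

theorem ipVal_le {M : ℝ}
    (h : ∀ x : V → ℝ, (∀ i, x i = 1 ∨ x i = -1) → edgeSum G w (fun i j => x i * x j) ≤ M) :
    ipVal G w ≤ M := by
  refine csSup_le ⟨_, fun _ => 1, fun _ => Or.inl rfl, rfl⟩ ?_
  rintro _ ⟨x, hx, rfl⟩
  exact h x hx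

theorem le_sdpVal {u : V → EuclideanSpace ℝ V} (hu : ∀ i, ‖u i‖ = 1) :
    edgeSum G w (fun i j => ⟪u i, u j⟫) ≤ sdpVal G w := by
  refine le_csSup ⟨∑ i, ∑ j, |w i j|, ?_⟩ ⟨u, hu, rfl⟩
  rintro _ ⟨v, hv, rfl⟩
  refine edgeSum_le_sum_abs G w fun i j => ?_
  simpa [hv] using abs_real_inner_le_norm (v i) (v j)

theorem sdpVal_le [Nonempty V] {M : ℝ}
    (h : ∀ u : V → EuclideanSpace ℝ V, (∀ i, ‖u i‖ = 1) →
      edgeSum G w (fun i j => ⟪u i, u j⟫) ≤ M) :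
    sdpVal G w ≤ M := by
  let e : EuclideanSpace ℝ V := EuclideanSpace.single (Classical.arbitrary V) 1
  refine csSup_le ⟨_, fun _ => e, fun _ => by simp [e], rfl⟩ ?_
  rintro _ ⟨u, hu, rfl⟩
  exact h u hu

variable {G} in
theorem kappaVal_eq_of_sdpVal_le_mul {c : ℝ} (hc : 0 ≤ c) (hip : ∀ w, 0 ≤ ipVal G w)
    (hsdp : ∀ w, sdpVal G w ≤ c * ipVal G w) {w₀ : V → V → ℝ} (hpos : 0 < ipVal G w₀)
    (hw₀ : c * ipVal G w₀ ≤ sdpVal G w₀) :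
    kappaVal G = c := by
  refine IsGreatest.csSup_eq ⟨⟨w₀, ?_⟩, ?_⟩
  · rw [eq_div_iff hpos.ne']
    exact (le_antisymm (hsdp w₀) hw₀).symm
  · rintro _ ⟨w, rfl⟩
    rcases (hip w).eq_or_lt with h | h
    · rwa [← h, div_zero]
    · exact (div_le_iff₀ h).2 (hsdp w)

end Generic

theorem neg_three_halves_le_inner_add_inner_add_inner {E : Type*} [NormedAddCommGroup E]
    [InnerProductSpace ℝ E] {a b c : E} (ha : ‖a‖ = 1) (hb : ‖b‖ = 1) (hc : ‖c‖ = 1) :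
    -(3 / 2) ≤ ⟪a, b⟫ + ⟪a, c⟫ + ⟪b, c⟫ := by
  have h : 0 ≤ ⟪a + b + c, a + b + c⟫ := real_inner_self_nonneg
  simp only [inner_add_left, inner_add_right, real_inner_self_eq_norm_sq, ha, hb, hc,
    real_inner_comm a b, real_inner_comm a c, real_inner_comm b c] at h
  linarith

section Triangle

theorem edgeSum_top_fin_three (w x : Fin 3 → Fin 3 → ℝ) :
    edgeSum (⊤ : SimpleGraph (Fin 3)) w x = w 0 1 * x 0 1 + w 0 2 * x 0 2 + w 1 2 * x 1 2 := by
  simp [edgeSum, Fin.sum_univ_three]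

variable (w : Fin 3 → Fin 3 → ℝ)

theorem cut_le_ipVal_top_fin_three :
    w 0 1 + w 0 2 + w 1 2 ≤ ipVal ⊤ w ∧ w 0 1 - w 0 2 - w 1 2 ≤ ipVal ⊤ w ∧
      -w 0 1 + w 0 2 - w 1 2 ≤ ipVal ⊤ w ∧ -w 0 1 - w 0 2 + w 1 2 ≤ ipVal ⊤ w := by
  have cut (s t : ℝ) (hs : s = 1 ∨ s = -1) (ht : t = 1 ∨ t = -1) :
      w 0 1 * s + w 0 2 * t + w 1 2 * (s * t) ≤ ipVal ⊤ w := by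
    have hx : ∀ i, ![1, s, t] i = 1 ∨ ![1, s, t] i = -1 := by
      intro i; fin_cases i <;> simp [hs, ht]
    simpa [edgeSum_top_fin_three] using le_ipVal ⊤ w hx
  refine ⟨?_, ?_, ?_, ?_⟩
  · simpa using cut 1 1 (by simp) (by simp)
  · simpa [sub_eq_add_neg] using cut 1 (-1) (by simp) (by simp)
  · simpa [sub_eq_add_neg] using cut (-1) 1 (by simp) (by simp)
  · simpa [sub_eq_add_neg] using cut (-1) (-1) (by simp) (by simp)

theorem ipVal_top_fin_three_nonneg : 0 ≤ ipVal ⊤ w := by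
  obtain ⟨h₁, h₂, h₃, h₄⟩ := cut_le_ipVal_top_fin_three w
  linarith

theorem sdpVal_top_fin_three_le : sdpVal ⊤ w ≤ 3 / 2 * ipVal ⊤ w := by
  refine sdpVal_le ⊤ w fun u hu => ?_
  obtain ⟨h₁, h₂, h₃, h₄⟩ := cut_le_ipVal_top_fin_three w
  have hu' (i : Fin 3) : ‖-u i‖ = 1 := (norm_neg _).trans (hu i)
  have e₁ := neg_three_halves_le_inner_add_inner_add_inner (hu 0) (hu 1) (hu 2)
  have e₂ := neg_three_halves_le_inner_add_inner_add_inner (hu 0) (hu 1) (hu' 2)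
  have e₃ := neg_three_halves_le_inner_add_inner_add_inner (hu 0) (hu' 1) (hu 2)
  have e₄ := neg_three_halves_le_inner_add_inner_add_inner (hu 0) (hu' 1) (hu' 2)
  simp only [inner_neg_left, inner_neg_right, neg_neg] at e₂ e₃ e₄
  rw [edgeSum_top_fin_three]
  set a := ⟪u 0, u 1⟫
  set b := ⟪u 0, u 2⟫
  set c := ⟪u 1, u 2⟫
  set M := ipVal ⊤ w
  calc w 0 1 * a + w 0 2 * b + w 1 2 * c
      = ((3 + 2 * (a + b + c)) * (w 0 1 + w 0 2 + w 1 2)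
          + (3 + 2 * (a - b - c)) * (w 0 1 - w 0 2 - w 1 2)
          + (3 + 2 * (-a + b - c)) * (-w 0 1 + w 0 2 - w 1 2)
          + (3 + 2 * (-a - b + c)) * (-w 0 1 - w 0 2 + w 1 2)) / 8 := by ring
    _ ≤ ((3 + 2 * (a + b + c)) * M + (3 + 2 * (a - b - c)) * M
          + (3 + 2 * (-a + b - c)) * M + (3 + 2 * (-a - b + c)) * M) / 8 := by
      gcongr <;> linarith
    _ = 3 / 2 * M := by ring

theorem ipVal_top_fin_three_neg_one : ipVal ⊤ (fun _ _ : Fin 3 => (-1 : ℝ)) = 1 := by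
  refine le_antisymm (ipVal_le _ _ fun x hx => ?_) ?_
  · rw [edgeSum_top_fin_three]
    rcases hx 0 with h₀ | h₀ <;> rcases hx 1 with h₁ | h₁ <;> rcases hx 2 with h₂ | h₂ <;>
      norm_num [h₀, h₁, h₂]
  · simpa using (cut_le_ipVal_top_fin_three fun _ _ => -1).2.1

theorem three_halves_le_sdpVal_top_fin_three_neg_one :
    3 / 2 ≤ sdpVal ⊤ (fun _ _ : Fin 3 => (-1 : ℝ)) := by
  let u : Fin 3 → EuclideanSpace ℝ (Fin 3) :=
    ![!₂[1, 0, 0], !₂[-1 / 2, √3 / 2, 0], !₂[-1 / 2, -(√3 / 2), 0]]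
  have h3 : √3 ^ 2 = 3 := Real.sq_sqrt (by norm_num)
  have hu : ∀ i, ‖u i‖ = 1 := by
    intro i
    rw [EuclideanSpace.norm_eq, Real.sqrt_eq_one]
    fin_cases i <;> simp [u, Fin.sum_univ_three] <;> linarith
  convert le_sdpVal ⊤ _ hu using 1
  simp [edgeSum_top_fin_three, u, PiLp.inner_apply, Fin.sum_univ_three]
  linarith

end Triangle

/-- the Grothendieck constant of the triangle `K₃` is `3/2`. -/
theorem kappa_K3 : kappaVal (⊤ : SimpleGraph (Fin 3)) = 3 / 2 := by
  have hip := ipVal_top_fin_three_neg_one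
  refine kappaVal_eq_of_sdpVal_le_mul (by norm_num) ipVal_top_fin_three_nonneg
    sdpVal_top_fin_three_le (hip ▸ one_pos) ?_
  rw [hip, mul_one]
  exact three_halves_le_sdpVal_top_fin_three_neg_one
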